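/- arXiv:1802.08445 — 2 statements merged into one kernel-verified Lean document; each statement's English description precedes it below -/
import Mathlib

section
/- Let F = ⟨A, R, W, S⟩ be a semiring-based weighted argumentation framework over an absorptive c-semiring S, and let Z ⊆ A be w-conflict-free. Then Z is w-admissible if and only if for every j ∈ A \ Z, ⊗_{i ∈ Z} W(i, j) ≤_S ⊗_{i ∈ Z} W(j, i). -/
/-!
In an absorptive c-semiring every element lies below `1` and a product equals `1` only if each
factor does, so a w-conflict-free set carries weight `1` internally and every attacker of a
member of `Z` lies outside `Z`. For `b ∈ Z` the defence condition
`W(Z, a) ≤ W(a, Z ∪ {b})` does not depend on `b`, so defending every member against every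
attacker outside `Z` is the stated condition, which holds trivially when `W(j, Z) = 1`.
-/

open Finset

variable {A : Type*} [Fintype A] [DecidableEq A] {S : Type*} [CommSemiring S]

/-- The order induced by the idempotent addition of a c-semiring: `a ≤ₛ b` iff `a + b = b`. -/
def sLE (a b : S) : Prop := a + b = b

/-- The attack weight `W(B, D)` from a set of arguments `B` to a set `D`:
the semiring product of all pairwise weights. -/
def Wsets (W : A → A → S) (B D : Finset A) : S := ∏ b ∈ B, ∏ d ∈ D, W b d

/-- `B` is w-conflict-free iff `W(B, B) = ⊤` (here `⊤` is the multiplicative unit `1`). -/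
def wConflictFree (W : A → A → S) (B : Finset A) : Prop := Wsets W B B = 1

/-- Within the framework whose set of arguments is `U`, the set `B` w-defends `b`:
for every attacker `a ∈ U` of `b` (i.e. `W a b ≠ ⊤`), `W(a, B ∪ {b}) ≥ₛ W(B, a)`. -/
def wDefendsIn (W : A → A → S) (U B : Finset A) (b : A) : Prop :=
  ∀ a ∈ U, W a b ≠ 1 → sLE (Wsets W B {a}) (Wsets W {a} (insert b B))

/-- `B` is w-admissible in the framework with argument set `U`:
`B ⊆ U`, `B` is w-conflict-free, and `B` w-defends each of its members. -/
def wAdmissibleIn (W : A → A → S) (U B : Finset A) : Prop :=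
  B ⊆ U ∧ wConflictFree W B ∧ ∀ b ∈ B, wDefendsIn W U B b

/-- `B` is a w-stable extension: w-admissible and every argument of `U` outside `B`
is attacked by some member of `B`. -/
def wStableIn (W : A → A → S) (U B : Finset A) : Prop :=
  wAdmissibleIn W U B ∧ ∀ a ∈ U, a ∉ B → ∃ b ∈ B, W b a ≠ 1

/-- `B` is a w-complete extension: w-admissible and it contains every argument `b`
such that `B ∪ {b}` is w-admissible. -/
def wCompleteIn (W : A → A → S) (U B : Finset A) : Prop :=
  wAdmissibleIn W U B ∧ ∀ b ∈ U, wAdmissibleIn W U (insert b B) → b ∈ B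

/-- `B` is a w-preferred extension: a ⊆-maximal w-admissible subset. -/
def wPreferredIn (W : A → A → S) (U B : Finset A) : Prop :=
  wAdmissibleIn W U B ∧ ∀ C : Finset A, wAdmissibleIn W U C → B ⊆ C → C = B


section Absorptive

variable (habs : ∀ s t : S, s + s * t = s)
include habs

theorem sLE_one_of_absorptive (x : S) : sLE x 1 := by
  simpa [sLE, add_comm] using habs 1 x

theorem eq_one_of_mul_eq_one_of_absorptive {x y : S} (h : x * y = 1) : x = 1 := by
  calc x = x + x * y := (habs x y).symm
    _ = x + 1 := by rw [h]
    _ = 1 := sLE_one_of_absorptive habs x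

omit [Fintype A] in
theorem weight_eq_one_of_wConflictFree {W : A → A → S} {Z : Finset A}
    (hcf : wConflictFree W Z) {a b : A} (ha : a ∈ Z) (hb : b ∈ Z) : W a b = 1 := by
  rw [wConflictFree, Wsets, ← mul_prod_erase Z _ ha, ← mul_prod_erase Z (W a) hb,
    mul_assoc] at hcf
  exact eq_one_of_mul_eq_one_of_absorptive habs hcf

end Absorptive

omit [Fintype A] in
theorem wDefendsIn_iff_of_mem {W : A → A → S} {U B : Finset A} {b : A} (hb : b ∈ B) :
    wDefendsIn W U B b ↔
      ∀ a ∈ U, W a b ≠ 1 → sLE (∏ i ∈ B, W i a) (∏ i ∈ B, W a i) := by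
  simp [wDefendsIn, Wsets, insert_eq_self.mpr hb]

theorem wAdmissible_iff_subblocks_general (W : A → A → S)
    (habs : ∀ s t : S, s + s * t = s)
    (Z : Finset A) (hcf : wConflictFree W Z) :
    wAdmissibleIn W Finset.univ Z ↔
      ∀ j : A, j ∉ Z → sLE (∏ i ∈ Z, W i j) (∏ i ∈ Z, W j i) := by
  constructor
  · rintro ⟨-, -, hdef⟩ j -
    by_cases hattacks : ∃ b ∈ Z, W j b ≠ 1
    · obtain ⟨b, hb, hjb⟩ := hattacks
      exact (wDefendsIn_iff_of_mem hb).mp (hdef b hb) j (mem_univ j) hjb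
    · push Not at hattacks
      rw [prod_eq_one hattacks]
      exact sLE_one_of_absorptive habs _
  · refine fun h => ⟨subset_univ Z, hcf, fun b hb => (wDefendsIn_iff_of_mem hb).mpr ?_⟩
    intro a _ hab
    exact h a fun haZ => hab (weight_eq_one_of_wConflictFree habs hcf haZ hb)

/-- A w-conflict-free subset Z is w-admissible iff for every j ∉ Z,
⊗_{i ∈ Z} W(i,j) ≤ₛ ⊗_{i ∈ Z} W(j,i). -/
theorem wAdmissible_iff_subblocks (W : A → A → S)
    (hadd : ∀ s : S, s + s = s) (habs : ∀ s t : S, s + s * t = s)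
    (Z : Finset A) (hcf : wConflictFree W Z) :
    wAdmissibleIn W Finset.univ Z ↔
      ∀ j : A, j ∉ Z → sLE (∏ i ∈ Z, W i j) (∏ i ∈ Z, W j i) :=
  wAdmissible_iff_subblocks_general W habs Z hcf
end

section
/- Let F = ⟨A, R, W, S⟩ be a semiring-based weighted argumentation framework over an absorptive c-semiring S, let Z ⊆ A be w-conflict-free, and fix z ∈ Z. Define the reduced WAF F' on A' = {z} ∪ (A \ Z) by W'(z, j) = ⊗_{i ∈ Z} W(i, j) and W'(j, z) = ⊗_{i ∈ Z} W(j, i) for j ∈ A \ Z, W'(j, j') = W(j, j') for j, j' ∈ A \ Z, and W'(z, z) = ⊤. Then Z is w-admissible in F if and only if {z} is w-admissible in F'. -/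
open Finset

variable {A : Type*} [Fintype A] [DecidableEq A] {S : Type*} [CommSemiring S]

/-
Only the rows and columns of `Z` enter the defence conditions for `Z`, and they enter only through
the products `∏ i ∈ Z, W i a` and `∏ i ∈ Z, W a i`; these are exactly the weights `W' z a` and
`W' a z` of the contracted framework. In an absorptive semiring a product equals `1` only when every
factor does, so `a` attacks some member of `Z` iff it attacks `z` in the contracted framework, and
conflict-freeness of `Z` rules out attackers inside `Z`.
-/

section Absorptive

variable {ι R : Type*} [CommSemiring R]

theorem eq_one_of_mul_eq_one_of_absorptive_s6 (habs : ∀ s t : R, s + s * t = s) {x y : R}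
    (h : x * y = 1) : x = 1 :=
  calc x = x + x * y := (habs x y).symm
    _ = 1 + 1 * x := by rw [h, one_mul, add_comm]
    _ = 1 := habs 1 x

theorem prod_eq_one_iff_of_absorptive (habs : ∀ s t : R, s + s * t = s) (s : Finset ι)
    (f : ι → R) : ∏ i ∈ s, f i = 1 ↔ ∀ i ∈ s, f i = 1 := by
  classical
  refine ⟨fun h i hi => ?_, Finset.prod_eq_one⟩
  rw [← Finset.mul_prod_erase s f hi] at h
  exact eq_one_of_mul_eq_one_of_absorptive_s6 habs h

end Absorptive

section Framework

variable {α : Type*} (W : α → α → S)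

theorem Wsets_singleton_left (a : α) (D : Finset α) : Wsets W {a} D = ∏ d ∈ D, W a d :=
  Finset.prod_singleton _ a

theorem Wsets_singleton_right (B : Finset α) (a : α) : Wsets W B {a} = ∏ b ∈ B, W b a :=
  Finset.prod_congr rfl fun _ _ => Finset.prod_singleton _ a

theorem wDefendsIn_self_iff [DecidableEq α] {U B : Finset α} {b : α} (hb : b ∈ B) :
    wDefendsIn W U B b ↔
      ∀ a ∈ U, W a b ≠ 1 → sLE (∏ i ∈ B, W i a) (∏ i ∈ B, W a i) := by
  simp only [wDefendsIn, Wsets_singleton_left, Wsets_singleton_right,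
    Finset.insert_eq_self.mpr hb]

theorem wAdmissibleIn_singleton_iff [DecidableEq α] (U : Finset α) (z : α) :
    wAdmissibleIn W U {z} ↔
      z ∈ U ∧ W z z = 1 ∧ ∀ a ∈ U, W a z ≠ 1 → sLE (W z a) (W a z) := by
  simp only [wAdmissibleIn, wConflictFree, Finset.singleton_subset_iff, Wsets_singleton_left,
    Finset.prod_singleton, Finset.mem_singleton, forall_eq,
    wDefendsIn_self_iff W (Finset.mem_singleton_self z)]

theorem wConflictFree.eq_one {W : α → α → S}
    (habs : ∀ s t : S, s + s * t = s) {Z : Finset α} (hcf : wConflictFree W Z) {a b : α}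
    (ha : a ∈ Z) (hb : b ∈ Z) : W a b = 1 :=
  (prod_eq_one_iff_of_absorptive habs Z _).mp
    ((prod_eq_one_iff_of_absorptive habs Z _).mp hcf a ha) b hb

theorem wAdmissibleIn_univ_iff_of_wConflictFree [Fintype α] [DecidableEq α]
    (habs : ∀ s t : S, s + s * t = s) {Z : Finset α} (hcf : wConflictFree W Z) :
    wAdmissibleIn W Finset.univ Z ↔
      ∀ a ∉ Z, ∏ i ∈ Z, W a i ≠ 1 → sLE (∏ i ∈ Z, W i a) (∏ i ∈ Z, W a i) := by
  simp only [wAdmissibleIn, Finset.subset_univ, hcf, true_and]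
  constructor
  · intro hdef a ha hattack
    simp only [Ne, prod_eq_one_iff_of_absorptive habs, not_forall] at hattack
    obtain ⟨b, hb, hab⟩ := hattack
    exact (wDefendsIn_self_iff W hb).mp (hdef b hb) a (Finset.mem_univ a) hab
  · intro hdef b hb
    rw [wDefendsIn_self_iff W hb]
    intro a _ hab
    have ha : a ∉ Z := fun ha => hab (hcf.eq_one habs ha hb)
    exact hdef a ha fun h => hab ((prod_eq_one_iff_of_absorptive habs Z _).mp h b hb)

end Framework

theorem contraction_preserves_admissible_general (W : A → A → S)
    (habs : ∀ s t : S, s + s * t = s)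
    (Z : Finset A) (hcf : wConflictFree W Z) (z : A)
    (W' : A → A → S)
    (hW'zj : ∀ j ∉ Z, W' z j = ∏ i ∈ Z, W i j)
    (hW'jz : ∀ j ∉ Z, W' j z = ∏ i ∈ Z, W j i)
    (hW'zz : W' z z = 1) :
    wAdmissibleIn W Finset.univ Z ↔
      wAdmissibleIn W' (insert z (Finset.univ \ Z)) {z} := by
  rw [wAdmissibleIn_univ_iff_of_wConflictFree W habs hcf, wAdmissibleIn_singleton_iff]
  simp only [Finset.mem_insert_self, hW'zz, Finset.forall_mem_insert, ne_eq, not_true_eq_false,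
    IsEmpty.forall_iff, Finset.mem_sdiff, Finset.mem_univ, true_and]
  refine forall₂_congr fun a ha => ?_
  rw [hW'zj a ha, hW'jz a ha]

/-- Matrix reduction by contraction of a w-conflict-free set Z into a single
argument z ∈ Z: Z is w-admissible in F iff {z} is w-admissible in the reduced framework F',
whose argument set is {z} ∪ (A \ Z) and whose weights W' are obtained by
combining the rows and columns of Z. -/
theorem contraction_preserves_admissible (W : A → A → S)
    (hadd : ∀ s : S, s + s = s) (habs : ∀ s t : S, s + s * t = s)
    (Z : Finset A) (hcf : wConflictFree W Z) (z : A) (hz : z ∈ Z)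
    (W' : A → A → S)
    (hW'zj : ∀ j ∉ Z, W' z j = ∏ i ∈ Z, W i j)
    (hW'jz : ∀ j ∉ Z, W' j z = ∏ i ∈ Z, W j i)
    (hW'jj : ∀ j ∉ Z, ∀ j' ∉ Z, W' j j' = W j j')
    (hW'zz : W' z z = 1) :
    wAdmissibleIn W Finset.univ Z ↔
      wAdmissibleIn W' (insert z (Finset.univ \ Z)) {z} :=
  contraction_preserves_admissible_general W habs Z hcf z W' hW'zj hW'jz hW'zz
end
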